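/- Any simple graph on 9 vertices in which every 5-vertex subset contains at least 2 edges has at least 9 edges. -/

import Mathlib

open scoped Classical

/-- The number of edges of `G` with both endpoints in `S`. -/
noncomputable def edgesIn {n : ℕ} (G : SimpleGraph (Fin n)) (S : Finset (Fin n)) : ℕ :=
  (G.edgeFinset.filter (fun e => ∀ v ∈ e, v ∈ S)).card

/-- Every 5-vertex subset spans at least 2 edges. -/
def Spans2 {n : ℕ} (G : SimpleGraph (Fin n)) : Prop :=
  ∀ S : Finset (Fin n), S.card = 5 → 2 ≤ edgesIn G S

/-!
If `G` has an independent set `T` of size 4, then each of the five sets `insert w T` with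
`w ∉ T` spans two edges, all of them incident to `w`; these ten edges are distinct. Otherwise
the complement of `G` is `K₄`-free, so by Turán's theorem it has at most `27` of the `36`
possible edges, leaving at least `9` for `G`.
-/

open Finset SimpleGraph

namespace SimpleGraph

variable {V : Type*} [Fintype V]

theorem card_edgeFinset_add_card_edgeFinset_compl (G : SimpleGraph V) :
    #G.edgeFinset + #Gᶜ.edgeFinset = (Fintype.card V).choose 2 := by
  rw [← card_union_of_disjoint (disjoint_edgeFinset.mpr disjoint_compl_right), ← edgeFinset_sup]
  convert card_edgeFinset_top_eq_card_choose_two (V := V) using 3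
  exact sup_compl_eq_top

theorem IndepSetFree.choose_two_le_card_edgeFinset_add {G : SimpleGraph V} {r : ℕ}
    (h : G.IndepSetFree (r + 1)) :
    (Fintype.card V).choose 2 ≤ #G.edgeFinset + #(turanGraph (Fintype.card V) r).edgeFinset := by
  rw [← card_edgeFinset_add_card_edgeFinset_compl G, card_edgeFinset_turanGraph]
  exact Nat.add_le_add_left (G.cliqueFree_compl.mpr h).card_edgeFinset_le _

end SimpleGraph

theorem sum_edgesIn_insert_le_card_edgeFinset {n : ℕ} (G : SimpleGraph (Fin n))
    {T : Finset (Fin n)} (hT : G.IsIndepSet T) :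
    ∑ w ∈ Tᶜ, edgesIn G (insert w T) ≤ #G.edgeFinset := by
  let F w := G.edgeFinset.filter fun e => ∀ v ∈ e, v ∈ insert w T
  have hdisj : ((Tᶜ : Finset (Fin n)) : Set (Fin n)).PairwiseDisjoint F := by
    intro w _ w' _ hne
    have mem_T {x} (h : x ∈ insert w T) (h' : x ∈ insert w' T) : x ∈ T := by grind
    refine disjoint_left.mpr fun e he he' => ?_
    induction e using Sym2.ind with
    | _ a b =>
      simp only [F, mem_filter, mem_edgeFinset, mem_edgeSet, Sym2.forall_mem_pair] at he he'
      exact hT (mem_T he.2.1 he'.2.1) (mem_T he.2.2 he'.2.2) he.1.ne he.1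
  calc ∑ w ∈ Tᶜ, edgesIn G (insert w T) = #(Tᶜ.biUnion F) := (card_biUnion hdisj).symm
    _ ≤ #G.edgeFinset := card_le_card (biUnion_subset.mpr fun _ _ => filter_subset _ _)

theorem Spans2.two_mul_le_card_edgeFinset {n : ℕ} {G : SimpleGraph (Fin n)} (hG : Spans2 G)
    {T : Finset (Fin n)} (hT : G.IsNIndepSet 4 T) :
    2 * (n - 4) ≤ #G.edgeFinset := by
  calc 2 * (n - 4) = ∑ _w ∈ Tᶜ, 2 := by
        rw [sum_const, card_compl, Fintype.card_fin, hT.card_eq, smul_eq_mul, mul_comm]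
    _ ≤ ∑ w ∈ Tᶜ, edgesIn G (insert w T) := sum_le_sum fun w hw => hG _ <| by
        rw [card_insert_of_notMem (mem_compl.mp hw), hT.card_eq]
    _ ≤ #G.edgeFinset := sum_edgesIn_insert_le_card_edgeFinset G hT.isIndepSet

theorem stmt_6 (G : SimpleGraph (Fin 9)) (hG : Spans2 G) :
    9 ≤ G.edgeFinset.card := by
  by_cases hfree : G.IndepSetFree 4
  · have := hfree.choose_two_le_card_edgeFinset_add (r := 3)
    simp only [Fintype.card_fin, card_edgeFinset_turanGraph, Nat.choose_two_right] at this
    norm_num at this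
    omega
  · obtain ⟨T, hT⟩ : ∃ T, G.IsNIndepSet 4 T := by simpa [IndepSetFree] using hfree
    have := hG.two_mul_le_card_edgeFinset hT
    omega
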